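/- Suppose σ̂_A > σ̂_B and σ̃_A < σ̃_B, and let α_min := min{Φ((Δμ − Δβ)/Δσ̂), Φ(Δμ/Δσ̃)} and α_max := max{Φ((Δμ − Δβ)/Δσ̂), Φ(Δμ/Δσ̃)}, with α_min < α_max. If α ∈ (α_min, α_max), then the group-oblivious and the Bayesian-optimal selection rates of group A lie on the same side of the demographic-parity rate α: either α < min(x^obl, x^opt) or α > max(x^obl, x^opt). -/
import Mathlib


noncomputable def gpdf (t : ℝ) : ℝ := Real.exp (-t ^ 2 / 2) / Real.sqrt (2 * Real.pi)

noncomputable def gcdf (x : ℝ) : ℝ := ∫ t in Set.Iic x, gpdf t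

noncomputable def gquant : ℝ → ℝ := Function.invFun gcdf

noncomputable def sHat (η σ : ℝ) : ℝ := Real.sqrt (η ^ 2 + σ ^ 2)

noncomputable def sTil (η σ : ℝ) : ℝ := η ^ 2 / sHat η σ

def Dset (pA α : ℝ) : Set ℝ :=
  {x | x ∈ Set.Ioo (0:ℝ) 1 ∧ (α - pA * x) / (1 - pA) ∈ Set.Ioo (0:ℝ) 1}

noncomputable def Qfun (pA α μA μB sA sB x : ℝ) : ℝ :=
  (1 / α) * (pA * (μA * x + sA * gpdf (gquant (1 - x)))
    + (1 - pA) * (μB * ((α - pA * x) / (1 - pA))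
      + sB * gpdf (gquant (1 - (α - pA * x) / (1 - pA)))))

noncomputable def clampTo (lo hi x : ℝ) : ℝ := min hi (max lo x)


open MeasureTheory Set Real

lemma gpdf_pos (t : ℝ) : 0 < gpdf t :=
  div_pos (Real.exp_pos _) (Real.sqrt_pos.2 (by positivity))

lemma gpdf_eq (t : ℝ) : gpdf t = Real.exp (-(1/2) * t ^ 2) / Real.sqrt (2 * Real.pi) := by
  unfold gpdf; ring_nf

lemma gpdf_integrable : Integrable gpdf := by
  have h := (integrable_exp_neg_mul_sq (by norm_num : (0:ℝ) < 1/2)).div_const (Real.sqrt (2 * Real.pi))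
  refine h.congr (Filter.Eventually.of_forall fun t => ?_)
  rw [gpdf_eq]

lemma gpdf_total : ∫ t, gpdf t = 1 := by
  have h : ∫ t, gpdf t = (∫ t : ℝ, Real.exp (-(1/2) * t ^ 2)) / Real.sqrt (2 * Real.pi) := by
    simp_rw [gpdf_eq]
    exact integral_div _ _
  rw [h, integral_gaussian]
  rw [show (π / (1/2)) = 2 * π by ring]
  rw [div_self (by positivity)]

lemma gcdf_mono {a b : ℝ} (hab : a ≤ b) : gcdf a ≤ gcdf b := by
  unfold gcdf
  apply setIntegral_mono_set gpdf_integrable.integrableOn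
    (Filter.Eventually.of_forall fun t => (gpdf_pos t).le)
  exact HasSubset.Subset.eventuallyLE (Iic_subset_Iic.2 hab)

lemma gcdf_strictMono {a b : ℝ} (hab : a < b) : gcdf a < gcdf b := by
  have h : gcdf b - gcdf a = ∫ t in a..b, gpdf t :=
    intervalIntegral.integral_Iic_sub_Iic gpdf_integrable.integrableOn gpdf_integrable.integrableOn
  have hpos : 0 < ∫ t in a..b, gpdf t :=
    intervalIntegral.intervalIntegral_pos_of_pos gpdf_integrable.intervalIntegrable
      (fun t => gpdf_pos t) hab
  linarith

lemma gpdf_even (t : ℝ) : gpdf (-t) = gpdf t := by unfold gpdf; ring_nf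

lemma gcdf_neg (x : ℝ) : gcdf (-x) = 1 - gcdf x := by
  have h1 : gcdf (-x) = ∫ t in Ioi x, gpdf t := by
    have h := integral_comp_neg_Iic (-x) gpdf
    simp_rw [gpdf_even] at h
    rw [neg_neg] at h
    exact h
  have h2 : gcdf x + ∫ t in Ioi x, gpdf t = 1 := by
    have := intervalIntegral.integral_Iic_add_Ioi (b := x)
      gpdf_integrable.integrableOn gpdf_integrable.integrableOn
    rw [gpdf_total] at this
    exact this
  rw [h1]; linarith

/-- Key comparison lemma: with `s₂ < s₁`, the group-1 selection rate is on the
opposite side of `α` from the cutoff `gcdf ((μ₁ - μ₂)/(s₁ - s₂))`. -/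
lemma key (pA α μ₁ μ₂ s₁ s₂ θ : ℝ) (hp : 0 < pA) (hp1 : pA < 1)
    (hs₁ : 0 < s₁) (hs₂ : 0 < s₂) (hss : s₂ < s₁)
    (hθ : pA * (1 - gcdf ((θ - μ₁) / s₁)) + (1 - pA) * (1 - gcdf ((θ - μ₂) / s₂)) = α) :
    (gcdf ((μ₁ - μ₂) / (s₁ - s₂)) < α → 1 - gcdf ((θ - μ₁) / s₁) < α) ∧
    (α < gcdf ((μ₁ - μ₂) / (s₁ - s₂)) → α < 1 - gcdf ((θ - μ₁) / s₁)) := by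
  set a := (θ - μ₁) / s₁ with ha
  set b := (θ - μ₂) / s₂ with hb
  set q := (μ₁ - μ₂) / (s₁ - s₂) with hq
  have hss' : 0 < s₁ - s₂ := by linarith
  -- b ≤ a implies a ≤ -q and b ≤ -q
  have hba : ∀ _ : b ≤ a, a ≤ -q ∧ b ≤ -q := by
    intro h
    have h1 : s₁ * (θ - μ₂) ≤ s₂ * (θ - μ₁) := by
      rw [hb, ha, div_le_div_iff₀ hs₂ hs₁] at h
      nlinarith
    constructor
    · rw [ha, hq, ← neg_div, div_le_div_iff₀ hs₁ hss']
      nlinarith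
    · rw [hb, hq, ← neg_div, div_le_div_iff₀ hs₂ hss']
      nlinarith
  -- a ≤ b implies -q ≤ a and -q ≤ b
  have hab : ∀ _ : a ≤ b, -q ≤ a ∧ -q ≤ b := by
    intro h
    have h1 : s₂ * (θ - μ₁) ≤ s₁ * (θ - μ₂) := by
      rw [hb, ha, div_le_div_iff₀ hs₁ hs₂] at h
      nlinarith
    constructor
    · rw [ha, hq, ← neg_div, div_le_div_iff₀ hss' hs₁]
      nlinarith
    · rw [hb, hq, ← neg_div, div_le_div_iff₀ hss' hs₂]
      nlinarith
  have hnegq : gcdf (-q) = 1 - gcdf q := gcdf_neg q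
  constructor
  · intro hlt
    have hblta : b < a := by
      by_contra hc
      push_neg at hc
      obtain ⟨h1, h2⟩ := hab hc
      have g1 : gcdf (-q) ≤ gcdf a := gcdf_mono h1
      have g2 : gcdf (-q) ≤ gcdf b := gcdf_mono h2
      nlinarith
    have : gcdf b < gcdf a := gcdf_strictMono hblta
    nlinarith
  · intro hlt
    have haltb : a < b := by
      by_contra hc
      push_neg at hc
      obtain ⟨h1, h2⟩ := hba hc
      have g1 : gcdf a ≤ gcdf (-q) := gcdf_mono h1
      have g2 : gcdf b ≤ gcdf (-q) := gcdf_mono h2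
      nlinarith
    have : gcdf a < gcdf b := gcdf_strictMono haltb
    nlinarith

/-- for budgets strictly between the two cutoffs, the
group-oblivious and Bayesian-optimal selection rates of group `A` lie on the
same side of the demographic-parity rate `α`. -/
theorem stmt19 (pA α μA μB ηA ηB σA σB βA βB θ θt xobl xopt : ℝ)
    (hpA : pA ∈ Set.Ioo (0:ℝ) 1) (hα01 : α ∈ Set.Ioo (0:ℝ) 1)
    (hηA : 0 < ηA) (hηB : 0 < ηB) (hσA : 0 < σA) (hσB : 0 < σB)
    (hshat : sHat ηB σB < sHat ηA σA) (hstil : sTil ηA σA < sTil ηB σB)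
    (hlt : min (gcdf (((μA - μB) - (βA - βB)) / (sHat ηA σA - sHat ηB σB)))
               (gcdf ((μA - μB) / (sTil ηA σA - sTil ηB σB)))
         < max (gcdf (((μA - μB) - (βA - βB)) / (sHat ηA σA - sHat ηB σB)))
               (gcdf ((μA - μB) / (sTil ηA σA - sTil ηB σB))))
    (hθ : pA * (1 - gcdf ((θ - μA + βA) / sHat ηA σA))
        + (1 - pA) * (1 - gcdf ((θ - μB + βB) / sHat ηB σB)) = α)
    (hθt : pA * (1 - gcdf ((θt - μA) / sTil ηA σA))
        + (1 - pA) * (1 - gcdf ((θt - μB) / sTil ηB σB)) = α)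
    (hxobl : xobl = 1 - gcdf ((θ - μA + βA) / sHat ηA σA))
    (hxopt : xopt = 1 - gcdf ((θt - μA) / sTil ηA σA))
    (hα : α ∈ Set.Ioo
            (min (gcdf (((μA - μB) - (βA - βB)) / (sHat ηA σA - sHat ηB σB)))
                 (gcdf ((μA - μB) / (sTil ηA σA - sTil ηB σB))))
            (max (gcdf (((μA - μB) - (βA - βB)) / (sHat ηA σA - sHat ηB σB)))
                 (gcdf ((μA - μB) / (sTil ηA σA - sTil ηB σB))))) :
    α < min xobl xopt ∨ max xobl xopt < α := by
  obtain ⟨hp, hp1⟩ := hpA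
  set sA := sHat ηA σA with hsAdef
  set sB := sHat ηB σB with hsBdef
  set tA := sTil ηA σA with htAdef
  set tB := sTil ηB σB with htBdef
  have hsA : 0 < sA := Real.sqrt_pos.2 (by positivity)
  have hsB : 0 < sB := Real.sqrt_pos.2 (by positivity)
  have htA : 0 < tA := div_pos (by positivity) hsA
  have htB : 0 < tB := div_pos (by positivity) hsB
  set α₁ := gcdf (((μA - μB) - (βA - βB)) / (sA - sB)) with hα₁
  set α₂ := gcdf ((μA - μB) / (tA - tB)) with hα₂
  -- oblivious part
  have hθ' : pA * (1 - gcdf ((θ - (μA - βA)) / sA))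
      + (1 - pA) * (1 - gcdf ((θ - (μB - βB)) / sB)) = α := by
    rw [show θ - (μA - βA) = θ - μA + βA by ring, show θ - (μB - βB) = θ - μB + βB by ring]
    exact hθ
  have hobl := key pA α (μA - βA) (μB - βB) sA sB θ hp hp1 hsA hsB hshat hθ'
  rw [show (μA - βA) - (μB - βB) = (μA - μB) - (βA - βB) by ring] at hobl
  rw [show θ - (μA - βA) = θ - μA + βA by ring] at hobl
  rw [← hxobl, ← hα₁] at hobl
  -- optimal part (groups swapped)
  have hθt' : (1 - pA) * (1 - gcdf ((θt - μB) / tB))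
      + (1 - (1 - pA)) * (1 - gcdf ((θt - μA) / tA)) = α := by linarith
  have hopt := key (1 - pA) α μB μA tB tA θt (by linarith) (by linarith) htB htA hstil hθt'
  rw [show (μB - μA) / (tB - tA) = (μA - μB) / (tA - tB) by
        rw [show μB - μA = -(μA - μB) by ring, show tB - tA = -(tA - tB) by ring,
          neg_div_neg_eq]] at hopt
  rw [← hα₂] at hopt
  set xB := 1 - gcdf ((θt - μB) / tB) with hxB
  have hmix : pA * xopt + (1 - pA) * xB = α := by rw [hxopt, hxB]; linarith
  obtain ⟨hαmin, hαmax⟩ := hα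
  rcases lt_trichotomy α₁ α₂ with h12 | h12 | h12
  · -- α₁ < α < α₂ : both rates below α
    rw [min_eq_left h12.le] at hαmin
    rw [max_eq_right h12.le] at hαmax
    have h1 : xobl < α := hobl.1 hαmin
    have h2 : α < xB := hopt.2 hαmax
    have h3 : xopt < α := by nlinarith
    exact Or.inr (max_lt h1 h3)
  · rw [h12] at hlt; simp at hlt
  · -- α₂ < α < α₁ : both rates above α
    rw [min_eq_right h12.le] at hαmin
    rw [max_eq_left h12.le] at hαmax
    have h1 : α < xobl := hobl.2 hαmax
    have h2 : xB < α := hopt.1 hαmin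
    have h3 : α < xopt := by nlinarith
    exact Or.inl (lt_min h1 h3)
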